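/- arXiv:2310.09416 — 6 statements merged into one kernel-verified Lean document; each statement's English description precedes it below -/
import Mathlib

section
/- The number of labelled rooted forests on k vertices (forests on vertex set {1,...,k} with one distinguished root in each component) with exactly m components equals C(k-1, m-1) * k^(k-m). -/
/-!
Pitman's double counting. Let `F m` be the number of rooted forests with `m` trees on `n`
vertices. Joining the root `r` of one tree to a vertex `v` of another tree and un-rooting `r`
turns a forest with `m + 1` trees together with the choice of `v` (`n` ways) and of `r`
(`m` ways) into a forest with `m` trees together with a non-root vertex `r` (`n - m` ways).
The operation is invertible: `v` is the second vertex on the path from `r` to its new root, so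
cutting that edge and making `r` a root undoes it. Hence `F (m + 1) * (n * m) = F m * (n - m)`,
and since `F n = 1` (only the edgeless forest has `n` roots) the closed form follows by
downward induction on `m`.
-/

open Finset

lemma Nat.card_sigma_of_forall_card_eq {α : Type*} [Finite α] {β : α → Type*}
    [∀ a, Finite (β a)] {c : ℕ} (h : ∀ a, Nat.card (β a) = c) :
    Nat.card (Σ a, β a) = Nat.card α * c := by
  have := Fintype.ofFinite α
  rw [Nat.card_sigma, Finset.sum_congr rfl fun a _ => h a, sum_const, Finset.card_univ,
    smul_eq_mul, Nat.card_eq_fintype_card]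

namespace SimpleGraph

variable {V : Type*} {G : SimpleGraph V}

lemma Reachable.of_sup_edge {a b x y : V} (h : (G ⊔ edge a b).Reachable x y) :
    G.Reachable x y ∨ (G.Reachable x a ∧ G.Reachable b y) ∨
      (G.Reachable x b ∧ G.Reachable a y) := by
  obtain ⟨w⟩ := h
  induction w with
  | nil => exact .inl .rfl
  | @cons x z y hxz _ ih =>
    rcases hxz with hxz | hxz
    · have hxz := hxz.reachable
      exact ih.imp (hxz.trans ·) (Or.imp (.imp_left (hxz.trans ·)) (.imp_left (hxz.trans ·)))
    · obtain ⟨⟨rfl, rfl⟩ | ⟨rfl, rfl⟩, -⟩ := (edge_adj ..).mp hxz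
      · rcases ih with h | ⟨h₁, h₂⟩ | ⟨-, h⟩
        exacts [.inr (.inl ⟨.rfl, h⟩), .inl (h₁.symm.trans h₂), .inl h]
      · rcases ih with h | ⟨-, h⟩ | ⟨h₁, h₂⟩
        exacts [.inr (.inr ⟨.rfl, h⟩), .inl h, .inl (h₁.symm.trans h₂)]

lemma sup_edge_adj {a b : V} (h : a ≠ b) : (G ⊔ edge a b).Adj a b :=
  .inr ((edge_adj ..).mpr ⟨.inl ⟨rfl, rfl⟩, h⟩)

lemma sup_edge_deleteEdges {a b : V} (h : ¬ G.Adj a b) :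
    (G ⊔ edge a b).deleteEdges {s(a, b)} = G := by
  ext x y
  simp only [deleteEdges_adj, sup_adj, edge_adj, Set.mem_singleton_iff, Sym2.eq_iff]
  grind [G.adj_symm]

lemma deleteEdges_sup_edge {a b : V} (h : G.Adj a b) :
    G.deleteEdges {s(a, b)} ⊔ edge a b = G := by
  ext x y
  simp only [deleteEdges_adj, sup_adj, edge_adj, Set.mem_singleton_iff, Sym2.eq_iff]
  grind [G.adj_symm, G.ne_of_adj]

lemma Walk.IsPath.reachable_deleteEdges_snd {r ρ : V} {p : G.Walk r ρ} (hp : p.IsPath)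
    (hnil : ¬ p.Nil) : (G.deleteEdges {s(r, p.snd)}).Reachable p.snd ρ := by
  have hr : r ∉ p.tail.support := (p.cons_support_tail hnil ▸ hp.support_nodup).notMem
  exact ⟨p.tail.toDeleteEdges {s(r, p.snd)} fun e he he' =>
    hr (p.tail.fst_mem_support_of_mem_edges (Set.mem_singleton_iff.mp he' ▸ he))⟩

lemma IsAcyclic.eq_snd_of_reachable_deleteEdges (hG : G.IsAcyclic) {r x ρ : V}
    {p : G.Walk r ρ} (hp : p.IsPath) (hadj : G.Adj r x)
    (h : (G.deleteEdges {s(r, x)}).Reachable x ρ) : x = p.snd := by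
  refine hG.eq_snd_of_adj_start hp hadj (by_contra fun hx => ?_)
  have hrρ : (G.deleteEdges {s(r, x)}).Reachable r ρ :=
    ⟨p.toDeleteEdges {s(r, x)} fun e he he' =>
      hx (p.snd_mem_support_of_mem_edges (Set.mem_singleton_iff.mp he' ▸ he))⟩
  exact isAcyclic_iff_forall_adj_isBridge.mp hG hadj (hrρ.trans h.symm)

def IsRootSet (G : SimpleGraph V) (S : Finset V) : Prop :=
  ∀ v, ∃! r, r ∈ S ∧ G.Reachable r v

namespace IsRootSet

variable {S : Finset V} {r v : V}

lemma eq_of_reachable (hS : G.IsRootSet S) {s t : V} (hs : s ∈ S) (ht : t ∈ S)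
    (h : G.Reachable s t) : s = t :=
  (hS t).unique ⟨hs, h⟩ ⟨ht, .rfl⟩

lemma card_connectedComponent (hS : G.IsRootSet S) : Nat.card G.ConnectedComponent = #S := by
  refine (Nat.card_eq_of_bijective (fun r : S => G.connectedComponentMk r) ⟨?_, ?_⟩).symm.trans
    (Nat.card_eq_finsetCard S)
  · rintro ⟨s, hs⟩ ⟨t, ht⟩ h
    exact Subtype.ext (hS.eq_of_reachable hs ht (ConnectedComponent.eq.mp h))
  · rintro ⟨w⟩
    obtain ⟨s, ⟨hs, hsw⟩, -⟩ := hS w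
    exact ⟨⟨s, hs⟩, ConnectedComponent.eq.mpr hsw⟩

lemma card_not_reachable (hS : G.IsRootSet S) (v : V) :
    Nat.card {r // r ∈ S ∧ ¬ G.Reachable r v} = #S - 1 := by
  classical
  obtain ⟨ρ, hρ, hρu⟩ := hS v
  have hreach : S.filter (G.Reachable · v) = {ρ} :=
    eq_singleton_iff_unique_mem.mpr ⟨mem_filter.mpr hρ, fun s hs => hρu s (mem_filter.mp hs)⟩
  rw [Nat.card_congr (Equiv.subtypeEquivRight fun r =>
      (mem_filter (p := (¬ G.Reachable · v))).symm),
    Nat.card_eq_finsetCard, ← card_filter_add_card_filter_not (s := S) (G.Reachable · v),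
    hreach, card_singleton, Nat.add_sub_cancel_left]

variable [DecidableEq V]

lemma sup_edge (hS : G.IsRootSet S) (hr : r ∈ S) (hrv : ¬ G.Reachable r v) :
    (G ⊔ edge r v).IsRootSet (S.erase r) := by
  intro w
  obtain ⟨ρv, ⟨hρv, hρvv⟩, hρvu⟩ := hS v
  obtain ⟨ρw, ⟨hρw, hρww⟩, hρwu⟩ := hS w
  have hnr : ∀ s ∈ S, s ≠ r → ¬ G.Reachable s r := fun s hs hsr h =>
    hsr (hS.eq_of_reachable hs hr h)
  have hrv' : r ≠ v := by rintro rfl; exact hrv .rfl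
  by_cases hrw : G.Reachable r w
  · refine ⟨ρv, ⟨mem_erase.mpr ⟨fun h => hrv (h ▸ hρvv), hρv⟩, ?_⟩, ?_⟩
    · exact (hρvv.mono le_sup_left).trans
        ((sup_edge_adj hrv').symm.reachable.trans (hrw.mono le_sup_left))
    · rintro s ⟨hs, hsw⟩
      obtain ⟨hsr, hs⟩ := mem_erase.mp hs
      rcases hsw.of_sup_edge with h | ⟨h, -⟩ | ⟨h, -⟩
      exacts [absurd (h.trans hrw.symm) (hnr s hs hsr), absurd h (hnr s hs hsr), hρvu s ⟨hs, h⟩]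
  · refine ⟨ρw, ⟨mem_erase.mpr ⟨fun h => hrw (h ▸ hρww), hρw⟩, hρww.mono le_sup_left⟩, ?_⟩
    rintro s ⟨hs, hsw⟩
    obtain ⟨hsr, hs⟩ := mem_erase.mp hs
    rcases hsw.of_sup_edge with h | ⟨h, -⟩ | ⟨-, h⟩
    exacts [hρwu s ⟨hs, h⟩, absurd h (hnr s hs hsr), absurd h hrw]

lemma deleteEdges (hG : G.IsAcyclic) (hS : G.IsRootSet S) (hr : r ∉ S) :
    ∃ v, G.Adj r v ∧ (G.deleteEdges {s(r, v)}).IsRootSet (insert r S) := by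
  obtain ⟨ρ, ⟨hρ, hρr⟩, hρu⟩ := hS r
  obtain ⟨p, hp⟩ := hρr.symm.exists_isPath
  have hnil : ¬ p.Nil := Walk.not_nil_of_ne fun h => hr (h ▸ hρ)
  refine ⟨p.snd, p.adj_snd hnil, fun w => ?_⟩
  set G₀ := G.deleteEdges {s(r, p.snd)}
  have hbridge : ¬ G₀.Reachable r p.snd :=
    isAcyclic_iff_forall_adj_isBridge.mp hG (p.adj_snd hnil)
  have hsndρ : G₀.Reachable p.snd ρ := hp.reachable_deleteEdges_snd hnil
  have hSr : ∀ s ∈ S, ¬ G₀.Reachable s r := fun s hs hsr => by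
    obtain rfl := hρu s ⟨hs, hsr.mono (deleteEdges_le _)⟩
    exact hbridge (hsr.symm.trans hsndρ.symm)
  by_cases hrw : G₀.Reachable r w
  · refine ⟨r, ⟨mem_insert_self r S, hrw⟩, fun s ⟨hs, hsw⟩ => ?_⟩
    exact (mem_insert.mp hs).resolve_right fun hs => hSr s hs (hsw.trans hrw.symm)
  · obtain ⟨ρw, ⟨hρw, hρww⟩, hρwu⟩ := hS w
    refine ⟨ρw, ⟨mem_insert_of_mem hρw, ?_⟩, ?_⟩
    · rw [← deleteEdges_sup_edge (p.adj_snd hnil)] at hρww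
      rcases hρww.of_sup_edge with h | ⟨h, -⟩ | ⟨-, h⟩
      exacts [h, absurd h (hSr ρw hρw), absurd h hrw]
    · rintro s ⟨hs, hsw⟩
      rcases mem_insert.mp hs with rfl | hs
      exacts [absurd hsw hrw, hρwu s ⟨hs, hsw.mono (deleteEdges_le _)⟩]

lemma eq_snd_of_sup_edge (hG : G.IsAcyclic) (hS : G.IsRootSet S) (hr : r ∈ S)
    (hrv : ¬ G.Reachable r v) {H : SimpleGraph V} (hH : G ⊔ edge r v = H) {ρ : V}
    (hρ : ρ ∈ S.erase r) {p : H.Walk r ρ} (hp : p.IsPath) : v = p.snd := by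
  subst hH
  obtain ⟨hρr, hρ⟩ := mem_erase.mp hρ
  have hvρ : G.Reachable v ρ := by
    rcases p.reachable.of_sup_edge with h | ⟨-, h⟩ | ⟨h, -⟩
    exacts [absurd (hS.eq_of_reachable hr hρ h).symm hρr, h, absurd h hrv]
  have hrv' : r ≠ v := by rintro rfl; exact hrv .rfl
  refine (hG.sup_edge_of_not_reachable hrv).eq_snd_of_reachable_deleteEdges hp
    (sup_edge_adj hrv') ?_
  rwa [sup_edge_deleteEdges fun h => hrv h.reachable]

end IsRootSet

variable (V) in
def rootedForests (m : ℕ) : Set (SimpleGraph V × Finset V) :=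
  {F | F.1.IsAcyclic ∧ F.1.IsRootSet F.2 ∧ #F.2 = m}

variable (V) in
/-- Triples `((G, S), v, r)` of a rooted forest with `m + 1` trees, a vertex `v` and a root `r`
whose tree does not contain `v`. -/
abbrev GraftData (m : ℕ) : Type _ :=
  {x : (SimpleGraph V × Finset V) × V × V //
    x.1 ∈ rootedForests V (m + 1) ∧ x.2.2 ∈ x.1.2 ∧ ¬ x.1.1.Reachable x.2.2 x.2.1}

variable (V) in
/-- Pairs `((G, S), r)` of a rooted forest with `m` trees and a vertex `r` that is not a root. -/
abbrev NonrootData (m : ℕ) : Type _ :=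
  {y : (SimpleGraph V × Finset V) × V // y.1 ∈ rootedForests V m ∧ y.2 ∉ y.1.2}

variable {m : ℕ}

section Counting

variable [Fintype V]

lemma card_graftData :
    Nat.card (GraftData V m) = Nat.card (rootedForests V (m + 1)) * (Fintype.card V * m) := by
  let e : GraftData V m ≃ Σ F : rootedForests V (m + 1), Σ v : V,
      {r // r ∈ F.1.2 ∧ ¬ F.1.1.Reachable r v} :=
    { toFun := fun x => ⟨⟨x.1.1, x.2.1⟩, x.1.2.1, x.1.2.2, x.2.2⟩
      invFun := fun y => ⟨(y.1.1, y.2.1, y.2.2.1), y.1.2, y.2.2.2⟩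
      left_inv := fun _ => rfl
      right_inv := fun _ => rfl }
  rw [Nat.card_congr e]
  refine Nat.card_sigma_of_forall_card_eq fun F => ?_
  rw [← Nat.card_eq_fintype_card]
  refine Nat.card_sigma_of_forall_card_eq fun v => ?_
  rw [F.2.2.1.card_not_reachable, F.2.2.2, Nat.add_sub_cancel]

lemma card_nonrootData :
    Nat.card (NonrootData V m) = Nat.card (rootedForests V m) * (Fintype.card V - m) := by
  let e : NonrootData V m ≃ Σ F : rootedForests V m, {r // r ∉ F.1.2} :=
    { toFun := fun x => ⟨⟨x.1.1, x.2.1⟩, x.1.2, x.2.2⟩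
      invFun := fun y => ⟨(y.1.1, y.2.1), y.1.2, y.2.2⟩
      left_inv := fun _ => rfl
      right_inv := fun _ => rfl }
  rw [Nat.card_congr e]
  refine Nat.card_sigma_of_forall_card_eq fun F => ?_
  classical
  rw [Nat.card_eq_fintype_card, Fintype.card_subtype_compl, Fintype.card_coe, F.2.2.2]

lemma rootedForests_fintypeCard :
    rootedForests V (Fintype.card V) = {(⊥, univ)} := by
  ext ⟨G, S⟩
  simp only [rootedForests, Set.mem_ofPred_eq, Set.mem_singleton_iff, Prod.mk.injEq]
  constructor
  · rintro ⟨-, hS, hcard⟩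
    obtain rfl := eq_univ_of_card S hcard
    refine ⟨?_, rfl⟩
    ext u v
    exact ⟨fun h => h.ne (hS.eq_of_reachable (mem_univ u) (mem_univ v) h.reachable), False.elim⟩
  · rintro ⟨rfl, rfl⟩
    exact ⟨isAcyclic_bot, fun v => ⟨v, ⟨mem_univ v, .rfl⟩, fun _ h => reachable_bot.mp h.2⟩,
      card_univ⟩

end Counting

section Graft

variable [DecidableEq V]

lemma sup_edge_mem_rootedForests {G : SimpleGraph V} {S : Finset V} {r v : V}
    (hF : (G, S) ∈ rootedForests V (m + 1)) (hr : r ∈ S) (hrv : ¬ G.Reachable r v) :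
    (G ⊔ edge r v, S.erase r) ∈ rootedForests V m :=
  ⟨hF.1.sup_edge_of_not_reachable hrv, hF.2.1.sup_edge hr hrv, by
    rw [card_erase_of_mem hr, hF.2.2, Nat.add_sub_cancel]⟩

def graft (x : GraftData V m) : NonrootData V m :=
  ⟨((x.1.1.1 ⊔ edge x.1.2.2 x.1.2.1, x.1.1.2.erase x.1.2.2), x.1.2.2),
    sup_edge_mem_rootedForests x.2.1 x.2.2.1 x.2.2.2, notMem_erase _ _⟩

lemma graft_injective : Function.Injective (graft (V := V) (m := m)) := by
  rintro ⟨⟨⟨G₁, S₁⟩, v₁, r⟩, hF₁, (hr₁ : r ∈ S₁), (hrv₁ : ¬ G₁.Reachable r v₁)⟩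
    ⟨⟨⟨G₂, S₂⟩, v₂, r₂⟩, hF₂, (hr₂ : r₂ ∈ S₂), (hrv₂ : ¬ G₂.Reachable r₂ v₂)⟩ h
  simp only [graft, Subtype.mk.injEq, Prod.mk.injEq] at h
  obtain ⟨⟨hG, hS⟩, rfl⟩ := h
  obtain ⟨ρ, ⟨hρ, hρr⟩, -⟩ := hF₁.2.1.sup_edge hr₁ hrv₁ r
  obtain ⟨p, hp⟩ := hρr.symm.exists_isPath
  have hv₁ := hF₁.2.1.eq_snd_of_sup_edge hF₁.1 hr₁ hrv₁ rfl hρ hp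
  have hv₂ := hF₂.2.1.eq_snd_of_sup_edge hF₂.1 hr₂ hrv₂ hG.symm (hS ▸ hρ) hp
  obtain rfl : v₁ = v₂ := hv₁.trans hv₂.symm
  have hG : G₁ = G₂ := by
    rw [← sup_edge_deleteEdges (G := G₁) fun h => hrv₁ h.reachable, hG,
      sup_edge_deleteEdges fun h => hrv₂ h.reachable]
  obtain rfl : S₁ = S₂ := by rw [← insert_erase hr₁, ← insert_erase hr₂, hS]
  subst hG
  rfl

lemma graft_surjective : Function.Surjective (graft (V := V) (m := m)) := by
  rintro ⟨⟨⟨G, S⟩, r⟩, hF, hr⟩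
  obtain ⟨v, hadj, hS⟩ := hF.2.1.deleteEdges hF.1 hr
  refine ⟨⟨((G.deleteEdges {s(r, v)}, insert r S), v, r),
    ⟨hF.1.anti (deleteEdges_le _), hS, by rw [card_insert_of_notMem hr, hF.2.2]⟩,
    mem_insert_self r S, isAcyclic_iff_forall_adj_isBridge.mp hF.1 hadj⟩, ?_⟩
  simp only [graft, deleteEdges_sup_edge hadj, erase_insert hr]

end Graft

variable [DecidableEq V] [Fintype V]

lemma card_rootedForests_succ_mul :
    Nat.card (rootedForests V (m + 1)) * (Fintype.card V * m) =
      Nat.card (rootedForests V m) * (Fintype.card V - m) := by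
  rw [← card_graftData, ← card_nonrootData]
  exact Nat.card_eq_of_bijective graft ⟨graft_injective, graft_surjective⟩

theorem card_rootedForests (hm : 1 ≤ m) (hmn : m ≤ Fintype.card V) :
    Nat.card (rootedForests V m) =
      (Fintype.card V - 1).choose (m - 1) * Fintype.card V ^ (Fintype.card V - m) := by
  set n := Fintype.card V
  induction hmn using Nat.decreasingInduction with
  | self => simp [n, rootedForests_fintypeCard]
  | of_succ m hmn ih =>
    have hm' : m - 1 + 1 = m := Nat.sub_add_cancel hm
    have hrec := card_rootedForests_succ_mul (V := V) (m := m)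
    rw [ih (Nat.le_add_left 1 m), Nat.add_sub_cancel] at hrec
    refine Nat.eq_of_mul_eq_mul_right (Nat.sub_pos_of_lt hmn) (hrec.symm.trans ?_)
    calc (n - 1).choose m * n ^ (n - (m + 1)) * (n * m)
        = ((n - 1).choose (m - 1 + 1) * (m - 1 + 1)) * (n ^ (n - (m + 1)) * n) := by
          rw [hm']; ring
      _ = (n - 1).choose (m - 1) * (n - 1 - (m - 1)) * n ^ (n - (m + 1) + 1) := by
          rw [Nat.choose_succ_right_eq, pow_succ]
      _ = (n - 1).choose (m - 1) * n ^ (n - m) * (n - m) := by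
          rw [show n - 1 - (m - 1) = n - m by omega, show n - (m + 1) + 1 = n - m by omega]
          ring

end SimpleGraph

theorem stmt_0_general (k m : ℕ) (hm : 1 ≤ m) (hmk : m ≤ k) :
    Nat.card {FR : SimpleGraph (Fin k) × Finset (Fin k) //
      FR.1.IsAcyclic ∧
      Nat.card FR.1.ConnectedComponent = m ∧
      (∀ v : Fin k, ∃! r : Fin k, r ∈ FR.2 ∧ FR.1.Reachable r v)} =
    (k - 1).choose (m - 1) * k ^ (k - m) := by
  have hforest (F : SimpleGraph (Fin k) × Finset (Fin k)) :
      (F.1.IsAcyclic ∧ Nat.card F.1.ConnectedComponent = m ∧ F.1.IsRootSet F.2) ↔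
        F ∈ SimpleGraph.rootedForests (Fin k) m :=
    ⟨fun ⟨hG, hc, hS⟩ => ⟨hG, hS, hS.card_connectedComponent ▸ hc⟩,
      fun ⟨hG, hS, hc⟩ => ⟨hG, hS.card_connectedComponent ▸ hc, hS⟩⟩
  refine (Nat.card_congr (Equiv.subtypeEquivRight hforest)).trans ?_
  simpa using SimpleGraph.card_rootedForests (V := Fin k) hm (by simpa using hmk)

/-- The number of labelled rooted forests on `k` vertices (an acyclic graph on `Fin k`
together with a set of roots, one in each connected component) with exactly `m`
connected components equals `C(k-1, m-1) * k^(k-m)`. -/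
theorem stmt_0 (k m : ℕ) (hk : 1 ≤ k) (hm : 1 ≤ m) (hmk : m ≤ k) :
    Nat.card {FR : SimpleGraph (Fin k) × Finset (Fin k) //
      FR.1.IsAcyclic ∧
      Nat.card FR.1.ConnectedComponent = m ∧
      (∀ v : Fin k, ∃! r : Fin k, r ∈ FR.2 ∧ FR.1.Reachable r v)} =
    (k - 1).choose (m - 1) * k ^ (k - m) :=
  stmt_0_general k m hm hmk
end

section
/- Let g(x) = (y * z^x / x^α)^x for fixed y > 0, z > 0, α > 0 and x > 0. If x is a critical point of g (i.e., a zero of the derivative of ln g), then g(x) = h(x), where h(x) = (y * (e/x)^α)^(x/2). -/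
/-!
For `t > 0`, `log g(t) = t (log y + t log z - α log t)`. Its derivative vanishing at `x` says
`2 x log z = α + α log x - log y`, and substituting this into `log g(x)` gives
`x/2 (log y + α - α log x) = log h(x)`; `log` is injective on positive reals.
-/

open Real

section

variable {y z α : ℝ}

theorem log_rpow_mul_rpow_div_rpow_self (hy : 0 < y) (hz : 0 < z) {t : ℝ} (ht : 0 < t) :
    log ((y * z ^ t / t ^ α) ^ t) = t * (log y + t * log z - α * log t) := by
  rw [log_rpow (by positivity), log_div (by positivity) (by positivity),
    log_mul hy.ne' (by positivity), log_rpow hz, log_rpow ht]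

theorem log_rpow_mul_exp_one_div_rpow (hy : 0 < y) {x : ℝ} (hx : 0 < x) :
    log ((y * (exp 1 / x) ^ α) ^ (x / 2)) = x / 2 * (log y + α * (1 - log x)) := by
  rw [log_rpow (by positivity), log_mul hy.ne' (by positivity), log_rpow (by positivity),
    log_div (exp_pos 1).ne' hx.ne', log_exp]

theorem hasDerivAt_mul_log_add_mul_log_sub_mul_log {x : ℝ} (hx : 0 < x) :
    HasDerivAt (fun t => t * (log y + t * log z - α * log t))
      (log y + 2 * x * log z - α * log x - α) x := by
  have hinner : HasDerivAt (fun t => log y + t * log z - α * log t) (log z - α * x⁻¹) x :=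
    (((hasDerivAt_id x).mul_const (log z)).const_add (log y)).sub
      ((hasDerivAt_log hx.ne').const_mul α) |>.congr_deriv (by simp)
  refine ((hasDerivAt_id' x).mul hinner).congr_deriv ?_
  field_simp
  ring

theorem log_add_two_mul_log_sub_mul_log_eq_of_hasDerivAt_zero (hy : 0 < y) (hz : 0 < z)
    {x : ℝ} (hx : 0 < x)
    (hcrit : HasDerivAt (fun t => log ((y * z ^ t / t ^ α) ^ t)) 0 x) :
    log y + 2 * x * log z - α * log x - α = 0 := by
  have hlog : (fun t => log ((y * z ^ t / t ^ α) ^ t)) =ᶠ[nhds x]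
      fun t => t * (log y + t * log z - α * log t) := by
    filter_upwards [eventually_gt_nhds hx] with t ht
    exact log_rpow_mul_rpow_div_rpow_self hy hz ht
  exact (hasDerivAt_mul_log_add_mul_log_sub_mul_log hx).unique
    (hcrit.congr_of_eventuallyEq hlog.symm)

end

theorem stmt_4_general (y z α : ℝ) (hy : 0 < y) (hz : 0 < z) (x : ℝ) (hx : 0 < x)
    (hcrit : HasDerivAt (fun t : ℝ => Real.log ((y * z ^ t / t ^ α) ^ t)) 0 x) :
    (y * z ^ x / x ^ α) ^ x = (y * (Real.exp 1 / x) ^ α) ^ (x / 2) := by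
  have hcrit_eq := log_add_two_mul_log_sub_mul_log_eq_of_hasDerivAt_zero hy hz hx hcrit
  refine log_injOn_pos (Set.mem_Ioi.2 (by positivity)) (Set.mem_Ioi.2 (by positivity)) ?_
  rw [log_rpow_mul_rpow_div_rpow_self hy hz hx, log_rpow_mul_exp_one_div_rpow hy hx]
  linear_combination (x / 2) * hcrit_eq

/-- If `x > 0` is a critical point of `g(x) = (y z^x / x^α)^x` (i.e. a zero of the
derivative of `ln g`), then `g(x) = h(x)` where `h(x) = (y (e/x)^α)^(x/2)`. -/
theorem stmt_4 (y z α : ℝ) (hy : 0 < y) (hz : 0 < z) (hα : 0 < α) (x : ℝ) (hx : 0 < x)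
    (hcrit : HasDerivAt (fun t : ℝ => Real.log ((y * z ^ t / t ^ α) ^ t)) 0 x) :
    (y * z ^ x / x ^ α) ^ x = (y * (Real.exp 1 / x) ^ α) ^ (x / 2) :=
  stmt_4_general y z α hy hz x hx hcrit
end

section
/- For fixed y > 0, z > 0, α > 0 and any 0 < A ≤ B, the maximum of g(x) = (y * z^x / x^α)^x over x ∈ [A, B] is at most the maximum of exp((α/2) * y^(1/α)), g(A), and g(B). -/
/-!
Write `g = exp ∘ F` with `F x = x log y + x² log z - α x log x` (`logG` below). The maximum of `F`
over `[A, B]` is attained at an endpoint or at an interior critical point `t`. There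
`2 t log z = α (log t + 1) - log y`, which turns `F t` into `(α t / 2) (1 + log (c / t))` with
`c = y ^ (1 / α)`, and `t (1 + log (c / t)) ≤ c` because `log u ≤ u - 1`.
-/

open Real Set

theorem le_max_of_deriv_eq_zero_imp_le {f : ℝ → ℝ} {a b M : ℝ}
    (hf : ContinuousOn f (Icc a b)) (hcrit : ∀ t ∈ Ioo a b, deriv f t = 0 → f t ≤ M) :
    ∀ x ∈ Icc a b, f x ≤ max M (max (f a) (f b)) := by
  intro x hx
  obtain ⟨t, ht, hmax⟩ := isCompact_Icc.exists_isMaxOn ⟨x, hx⟩ hf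
  have hxt : f x ≤ f t := hmax hx
  rcases ht.1.eq_or_lt with rfl | hat
  · exact le_max_of_le_right (le_max_of_le_left hxt)
  rcases ht.2.eq_or_lt with rfl | htb
  · exact le_max_of_le_right (le_max_of_le_right hxt)
  have hloc : IsLocalMax f t := hmax.isLocalMax (Icc_mem_nhds hat htb)
  exact le_max_of_le_left (hxt.trans (hcrit t ⟨hat, htb⟩ hloc.deriv_eq_zero))

theorem mul_one_add_log_div_le {c t : ℝ} (hc : 0 < c) (ht : 0 < t) :
    t * (1 + log (c / t)) ≤ c := by
  calc t * (1 + log (c / t)) ≤ t * (1 + (c / t - 1)) := by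
        gcongr; exact log_le_sub_one_of_pos (div_pos hc ht)
    _ = c := by field_simp; ring

noncomputable def logG (y z α x : ℝ) : ℝ := x * log y + x ^ 2 * log z - α * (x * log x)

theorem rpow_eq_exp_logG {y z α x : ℝ} (hy : 0 < y) (hz : 0 < z) (hx : 0 < x) :
    (y * z ^ x / x ^ α) ^ x = exp (logG y z α x) := by
  rw [rpow_def_of_pos (by positivity), log_div (by positivity) (by positivity),
    log_mul hy.ne' (by positivity), log_rpow hz, log_rpow hx, logG]
  ring_nf

theorem hasDerivAt_logG (y z α : ℝ) {x : ℝ} (hx : 0 < x) :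
    HasDerivAt (logG y z α) (log y + 2 * x * log z - α * (log x + 1)) x := by
  have := (((hasDerivAt_id' x).mul_const (log y)).add
    ((hasDerivAt_pow 2 x).mul_const (log z))).sub ((hasDerivAt_mul_log hx.ne').const_mul α)
  exact this.congr_deriv (by push_cast; ring)

theorem logG_le_of_deriv_eq_zero {y z α t : ℝ} (hy : 0 < y) (hα : 0 < α) (ht : 0 < t)
    (hcrit : deriv (logG y z α) t = 0) :
    logG y z α t ≤ α / 2 * y ^ (1 / α) := by
  set c := y ^ (1 / α)
  have hc : 0 < c := rpow_pos_of_pos hy _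
  have hlogc : α * log c = log y := by
    rw [log_rpow hy]; field_simp
  rw [(hasDerivAt_logG y z α ht).deriv] at hcrit
  have hvalue : logG y z α t = α / 2 * (t * (1 + log (c / t))) := by
    rw [logG, log_div hc.ne' ht.ne']
    linear_combination (t / 2) * hcrit - (t / 2) * hlogc
  rw [hvalue]
  exact mul_le_mul_of_nonneg_left (mul_one_add_log_div_le hc ht) (by positivity)

/-- For `y, z, α > 0` and `0 < A ≤ B`, the maximum of `g(x) = (y z^x / x^α)^x` over
`[A, B]` is at most `max { exp((α/2) y^(1/α)), g(A), g(B) }`. -/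
theorem stmt_6 (y z α A B : ℝ) (hy : 0 < y) (hz : 0 < z) (hα : 0 < α)
    (hA : 0 < A) (hAB : A ≤ B) :
    ∀ x ∈ Set.Icc A B,
      (y * z ^ x / x ^ α) ^ x
        ≤ max (Real.exp ((α / 2) * y ^ (1 / α)))
            (max ((y * z ^ A / A ^ α) ^ A) ((y * z ^ B / B ^ α) ^ B)) := by
  intro x hx
  have hpos : ∀ t ∈ Icc A B, 0 < t := fun t ht => hA.trans_le ht.1
  rw [rpow_eq_exp_logG hy hz (hpos x hx), rpow_eq_exp_logG hy hz hA,
    rpow_eq_exp_logG hy hz (hA.trans_le hAB), ← exp_monotone.map_max,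
    ← exp_monotone.map_max, exp_le_exp]
  have hcont : ContinuousOn (logG y z α) (Icc A B) := fun t ht =>
    (hasDerivAt_logG y z α (hpos t ht)).continuousAt.continuousWithinAt
  exact le_max_of_deriv_eq_zero_imp_le hcont
    (fun t ht => logG_le_of_deriv_eq_zero hy hα (hpos t (Ioo_subset_Icc_self ht))) x hx
end

section
/- For positive integers k, ℓ, m, h with ℓ ≤ k and a forest F with m components of sizes f_1,...,f_m summing to ℓ: the weighted sum Σ_{h=1}^{k-ℓ+m} f(k,h,{f_1,...,f_m}) * t^h, where f(k,h,{f_1,...,f_m}) = f_1...f_m Σ_{k_0=0}^{k-ℓ} C(k-ℓ,k_0) ℓ^(k-ℓ-k_0) C(k_0+m-1,h-1) (k-ℓ)^(k_0+m-h), equals f_1...f_m * (k + t)^(k-ℓ) * (k-ℓ+t)^(m-1) * t for any real t > 0. -/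
/-!
Summing over `h` first, the inner sum is a binomial expansion:
`∑_h C(K, h-1) b^(K+1-h) t^h = t (b+t)^K` with `K = k₀ + m - 1`. After pulling out
`t (b+t)^(m-1)`, what remains, `∑_{k₀} C(n, k₀) ℓ^(n-k₀) (b+t)^k₀`, is again binomial
and equals `(ℓ + b + t)^n`;
with `n = b = k - ℓ` this is `(k + t)^(k-ℓ)`.
-/

open Finset

variable {R : Type*} [CommSemiring R]

theorem sum_Icc_choose_pred_mul_pow_mul_pow {K M : ℕ} (hKM : K < M) (x t : R) :
    ∑ h ∈ Icc 1 M, (K.choose (h - 1) : R) * x ^ (K + 1 - h) * t ^ h = t * (t + x) ^ K := by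
  calc ∑ h ∈ Icc 1 M, (K.choose (h - 1) : R) * x ^ (K + 1 - h) * t ^ h
      = ∑ j ∈ range M, (K.choose j : R) * x ^ (K - j) * t ^ (j + 1) := by
        rw [← Ico_add_one_right_eq_Icc, sum_Ico_eq_sum_range]
        simp [add_comm 1]
    _ = ∑ j ∈ range (K + 1), (K.choose j : R) * x ^ (K - j) * t ^ (j + 1) := by
        refine (sum_subset (range_subset_range.2 hKM) fun j _ hj => ?_).symm
        rw [Nat.choose_eq_zero_of_lt (by simpa using hj), Nat.cast_zero, zero_mul, zero_mul]
    _ = t * (t + x) ^ K := by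
        rw [add_pow, mul_sum]
        exact sum_congr rfl fun j _ => by ring

theorem sum_Icc_sum_range_choose_mul_pow (n : ℕ) {m : ℕ} (hm : 1 ≤ m) (a b t : R) :
    ∑ h ∈ Icc 1 (n + m),
      (∑ k₀ ∈ range (n + 1), (n.choose k₀ : R) * a ^ (n - k₀)
        * ((k₀ + m - 1).choose (h - 1) : R) * b ^ (k₀ + m - h)) * t ^ h
    = (a + b + t) ^ n * (b + t) ^ (m - 1) * t := by
  calc ∑ h ∈ Icc 1 (n + m),
      (∑ k₀ ∈ range (n + 1), (n.choose k₀ : R) * a ^ (n - k₀)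
        * ((k₀ + m - 1).choose (h - 1) : R) * b ^ (k₀ + m - h)) * t ^ h
      = ∑ k₀ ∈ range (n + 1), (n.choose k₀ : R) * a ^ (n - k₀) * ∑ h ∈ Icc 1 (n + m),
          ((k₀ + m - 1).choose (h - 1) : R) * b ^ (k₀ + m - 1 + 1 - h) * t ^ h := by
        simp_rw [sum_mul, mul_sum]
        rw [sum_comm]
        refine sum_congr rfl fun k₀ _ => sum_congr rfl fun h _ => ?_
        rw [Nat.sub_add_cancel (by omega : 1 ≤ k₀ + m)]
        ring
    _ = ∑ k₀ ∈ range (n + 1), (n.choose k₀ : R) * a ^ (n - k₀) * (t * (t + b) ^ (k₀ + m - 1)) :=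
        sum_congr rfl fun k₀ hk₀ => by
          rw [sum_Icc_choose_pred_mul_pow_mul_pow (by simp at hk₀; omega)]
    _ = (a + b + t) ^ n * (b + t) ^ (m - 1) * t := by
        rw [show a + b + t = (b + t) + a by ring, add_pow, sum_mul, sum_mul]
        refine sum_congr rfl fun k₀ _ => ?_
        rw [Nat.add_sub_assoc hm, pow_add, add_comm t b]
        ring

theorem stmt_11_general (k ℓ m : ℕ) (hm : 1 ≤ m) (hℓk : ℓ ≤ k)
    (f : Fin m → ℕ) (t : ℝ) :
    ∑ h ∈ Finset.Icc 1 (k - ℓ + m),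
      ((∏ i, (f i : ℝ)) * ∑ k₀ ∈ Finset.range (k - ℓ + 1),
        ((k - ℓ).choose k₀ : ℝ) * (ℓ : ℝ) ^ (k - ℓ - k₀)
          * ((k₀ + m - 1).choose (h - 1) : ℝ) * ((k - ℓ : ℕ) : ℝ) ^ (k₀ + m - h))
        * t ^ h
    = (∏ i, (f i : ℝ)) * ((k : ℝ) + t) ^ (k - ℓ) * (((k - ℓ : ℕ) : ℝ) + t) ^ (m - 1)
        * t := by
  have hk : (ℓ : ℝ) + ((k - ℓ : ℕ) : ℝ) = k := by exact_mod_cast Nat.add_sub_cancel' hℓk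
  simp_rw [mul_assoc (∏ i, (f i : ℝ)), ← mul_sum]
  rw [sum_Icc_sum_range_choose_mul_pow (k - ℓ) hm, hk]

/-- With `f(k,h,{f_1,…,f_m}) = f_1⋯f_m ∑_{k₀=0}^{k-ℓ} C(k-ℓ,k₀) ℓ^(k-ℓ-k₀)
C(k₀+m-1,h-1) (k-ℓ)^(k₀+m-h)`, for any `t > 0`:
`∑_{h=1}^{k-ℓ+m} f(k,h,{f_1,…,f_m}) t^h = f_1⋯f_m (k+t)^(k-ℓ) (k-ℓ+t)^(m-1) t`. -/
theorem stmt_11 (k ℓ m : ℕ) (hk : 1 ≤ k) (hℓ : 1 ≤ ℓ) (hm : 1 ≤ m) (hℓk : ℓ ≤ k)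
    (f : Fin m → ℕ) (hf : ∀ i, 1 ≤ f i) (hsum : ∑ i, f i = ℓ) (t : ℝ) (ht : 0 < t) :
    ∑ h ∈ Finset.Icc 1 (k - ℓ + m),
      ((∏ i, (f i : ℝ)) * ∑ k₀ ∈ Finset.range (k - ℓ + 1),
        ((k - ℓ).choose k₀ : ℝ) * (ℓ : ℝ) ^ (k - ℓ - k₀)
          * ((k₀ + m - 1).choose (h - 1) : ℝ) * ((k - ℓ : ℕ) : ℝ) ^ (k₀ + m - h))
        * t ^ h
    = (∏ i, (f i : ℝ)) * ((k : ℝ) + t) ^ (k - ℓ) * (((k - ℓ : ℕ) : ℝ) + t) ^ (m - 1)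
        * t :=
  stmt_11_general k ℓ m hm hℓk f t
end

section
/- For any positive integers ℓ and m with m ≤ ℓ, the sum over all m-tuples of positive integers (f_1,...,f_m) with f_1 + ... + f_m = ℓ of the multinomial coefficient ℓ!/(f_1!...f_m!) times f_1^(f_1 - 1) * ... * f_m^(f_m - 1) equals m! * C(ℓ-1, m-1) * ℓ^(ℓ-m). -/
/-!
The Abel polynomials `pₙ = X (X + n)ⁿ⁻¹` satisfy `pₙ(0) = δₙ₀` and Abel's identity
`pₙ' = ∑ᵢ₊ⱼ₌ₙ C(n, i) i^(i-1) pⱼ`. Iterating the latter `m` times and evaluating at `0` turns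
`(pₗ)⁽ᵐ⁾(0)` into the sum over ordered compositions of `ℓ` into `m` positive parts, while
directly `(pₗ)⁽ᵐ⁾(0) = m! [Xᵐ] pₗ = m! C(ℓ - 1, m - 1) ℓ^(ℓ-m)`.
-/

open Polynomial Finset

section Derivative

variable {R : Type*} [Semiring R]

lemma Polynomial.eq_of_derivative_eq_of_eval_zero_eq [IsAddTorsionFree R] {p q : R[X]}
    (hd : derivative p = derivative q) (h0 : p.eval 0 = q.eval 0) : p = q := by
  ext (_ | n)
  · simpa only [coeff_zero_eq_eval_zero] using h0
  · have h := congr_arg (coeff · n) hd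
    simp only [coeff_derivative, ← Nat.cast_succ, ← nsmul_eq_mul'] at h
    exact nsmul_right_injective n.succ_ne_zero h

lemma Polynomial.eval_zero_iterate_derivative (p : R[X]) (k : ℕ) :
    (derivative^[k] p).eval 0 = k.factorial * p.coeff k := by
  rw [← coeff_zero_eq_eval_zero, coeff_iterate_derivative, zero_add, Nat.descFactorial_self,
    nsmul_eq_mul]

end Derivative

section MultinomialConv

variable {ι R : Type*} [DecidableEq ι] [CommSemiring R]

/-- The coefficient `n! [xⁿ] (∑ₖ c k xᵏ / k!) ^ #s` of an exponential generating function. -/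
def multinomialConv (s : Finset ι) (c : ℕ → R) (n : ℕ) : R :=
  ∑ f ∈ piAntidiag s n, Nat.multinomial s f * ∏ i ∈ s, c (f i)

lemma multinomialConv_empty (c : ℕ → R) (n : ℕ) :
    multinomialConv (∅ : Finset ι) c n = if n = 0 then 1 else 0 := by
  rw [multinomialConv, piAntidiag_empty]
  split_ifs <;> simp

lemma multinomialConv_cons {i : ι} {s : Finset ι} (hi : i ∉ s) (c : ℕ → R) (n : ℕ) :
    multinomialConv (cons i s hi) c n =
      ∑ x ∈ antidiagonal n, n.choose x.1 * c x.1 * multinomialConv s c x.2 := by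
  rw [multinomialConv, piAntidiag_cons, sum_disjiUnion]
  refine sum_congr rfl fun x hx => ?_
  rw [multinomialConv, mul_sum, sum_map]
  refine sum_congr rfl fun f hf => ?_
  rw [mem_piAntidiag] at hf
  rw [addRightEmbedding_apply, Nat.multinomial_cons, prod_cons]
  set g := f + fun t => if t = i then x.1 else 0
  have hgi : g i = x.1 := by simp [g, not_imp_comm.1 (hf.2 i) hi]
  have hgs : ∀ t ∈ s, g t = f t := fun t ht => by
    simp [g, show t ≠ i from fun h => hi (h ▸ ht)]
  rw [hgi, sum_congr rfl hgs, hf.1, mem_antidiagonal.1 hx, Nat.multinomial_congr hgs,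
    prod_congr rfl fun t ht => congrArg c (hgs t ht)]
  push_cast
  ring

theorem multinomialConv_eq_eval_iterate_derivative (p : ℕ → R[X]) (c : ℕ → R)
    (hp : ∀ n, (p n).eval 0 = if n = 0 then 1 else 0)
    (hder : ∀ n, derivative (p n) = ∑ x ∈ antidiagonal n, C (n.choose x.1 * c x.1) * p x.2)
    (s : Finset ι) (n : ℕ) :
    multinomialConv s c n = (derivative^[#s] (p n)).eval 0 := by
  induction s using Finset.cons_induction generalizing n with
  | empty => rw [multinomialConv_empty, card_empty, Function.iterate_zero_apply, hp]
  | cons i s hi ih =>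
    rw [multinomialConv_cons, card_cons, Function.iterate_succ_apply, hder, iterate_derivative_sum,
      eval_finsetSum]
    simp only [iterate_derivative_C_mul, eval_mul, eval_C, ih]

end MultinomialConv

section Abel

variable (R : Type*) [CommSemiring R]

noncomputable def abelPoly : ℕ → R[X]
  | 0 => 1
  | n + 1 => X * (X + C (n + 1 : R)) ^ n

/-- The guard matters: `0 ^ (0 - 1) = 1` in `ℕ`. -/
def rootedTreeCount (n : ℕ) : ℕ := if 0 < n then n ^ (n - 1) else 0

variable {R}

lemma eval_zero_abelPoly (n : ℕ) : (abelPoly R n).eval 0 = if n = 0 then 1 else 0 := by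
  cases n <;> simp [abelPoly]

lemma derivative_abelPoly_succ (n : ℕ) :
    derivative (abelPoly R (n + 1)) = ((n + 1 : ℕ) : R[X]) * (abelPoly R n).comp (X + 1) := by
  rcases n with _ | n
  · simp [abelPoly]
  · simp only [abelPoly, map_add, map_natCast, map_one, derivative_mul, derivative_X,
      derivative_pow, derivative_natCast, derivative_one, mul_comp, X_comp,
      pow_comp, add_comp, natCast_comp, one_comp]
    push_cast
    ring

lemma eval_zero_derivative_abelPoly_succ (n : ℕ) :
    (derivative (abelPoly R (n + 1))).eval 0 = rootedTreeCount (n + 1) := by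
  rw [derivative_abelPoly_succ, eval_mul, eval_natCast, eval_comp, eval_add, eval_X, eval_one,
    zero_add, rootedTreeCount, if_pos n.succ_pos, Nat.add_sub_cancel]
  rcases n with _ | n
  · simp [abelPoly]
  · rw [abelPoly, eval_mul, eval_pow, eval_add, eval_X, eval_C]
    push_cast
    ring

lemma Nat.choose_succ_mul_succ_of_add_eq {n i j : ℕ} (h : i + j = n) :
    (n + 1).choose i * (j + 1) = (n + 1) * n.choose i := by
  rw [mul_comm (n + 1), Nat.choose_mul_succ_eq, ← h]
  congr 2
  omega

/-- Abel's identity. Both sides `D n` satisfy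
`derivative (D (n + 1)) = (n + 1) * (D n).comp (X + 1)` and agree at `0`. -/
theorem derivative_abelPoly [IsAddTorsionFree R] (n : ℕ) :
    derivative (abelPoly R n) =
      ∑ x ∈ antidiagonal n, C (n.choose x.1 * rootedTreeCount x.1 : R) * abelPoly R x.2 := by
  induction n with
  | zero => simp [abelPoly, rootedTreeCount]
  | succ n ih =>
    apply eq_of_derivative_eq_of_eval_zero_eq
    · rw [derivative_abelPoly_succ, derivative_natCast_mul, derivative_comp, ih,
        derivative_sum, Nat.sum_antidiagonal_succ']
      simp only [derivative_add, derivative_X, derivative_one, add_zero, one_mul,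
        Polynomial.sum_comp, mul_comp, C_comp, derivative_C_mul, abelPoly.eq_1, mul_zero, zero_add,
        mul_sum, derivative_abelPoly_succ]
      refine sum_congr rfl fun x hx => ?_
      rw [← C_eq_natCast, ← C_eq_natCast, ← mul_assoc, ← mul_assoc, ← C_mul, ← C_mul]
      congr 2
      have key : (n + 1) * (n.choose x.1 * rootedTreeCount x.1) =
          (n + 1).choose x.1 * rootedTreeCount x.1 * (x.2 + 1) := by
        rw [← mul_assoc, ← Nat.choose_succ_mul_succ_of_add_eq (mem_antidiagonal.1 hx)]
        ring
      exact_mod_cast congrArg (Nat.cast (R := R)) key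
    · rw [eval_zero_derivative_abelPoly_succ, eval_finsetSum, Nat.sum_antidiagonal_succ']
      simp [eval_zero_abelPoly]

lemma coeff_abelPoly_succ_succ (n k : ℕ) :
    (abelPoly R (n + 1)).coeff (k + 1) = (n + 1 : R) ^ (n - k) * n.choose k := by
  rw [abelPoly, coeff_X_mul, coeff_X_add_C_pow]

end Abel

theorem sum_filter_pos_multinomial_eq_multinomialConv (ℓ m : ℕ) :
    ∑ f ∈ (Finset.Nat.antidiagonalTuple m ℓ).filter (fun f => ∀ i, 0 < f i),
      Nat.multinomial Finset.univ f * ∏ i, f i ^ (f i - 1) =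
    multinomialConv (univ : Finset (Fin m)) rootedTreeCount ℓ := by
  rw [multinomialConv, piAntidiag_univ_fin_eq_antidiagonalTuple, sum_filter]
  refine sum_congr rfl fun f _ => ?_
  simp only [rootedTreeCount, Fintype.prod_ite_zero, mul_ite, mul_zero, Nat.cast_id]

/-- For `1 ≤ m ≤ ℓ`, summing over ordered `m`-tuples of positive integers with sum `ℓ`:
`∑ (ℓ! / (f_1! ⋯ f_m!)) f_1^(f_1-1) ⋯ f_m^(f_m-1) = m! C(ℓ-1, m-1) ℓ^(ℓ-m)`. -/
theorem stmt_12 (ℓ m : ℕ) (hm : 1 ≤ m) (hmℓ : m ≤ ℓ) :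
    ∑ f ∈ (Finset.Nat.antidiagonalTuple m ℓ).filter (fun f => ∀ i, 0 < f i),
      Nat.multinomial Finset.univ f * ∏ i, f i ^ (f i - 1)
    = m.factorial * (ℓ - 1).choose (m - 1) * ℓ ^ (ℓ - m) := by
  obtain ⟨k, rfl⟩ : ∃ k, m = k + 1 := ⟨m - 1, by omega⟩
  obtain ⟨n, rfl⟩ : ∃ n, ℓ = n + 1 := ⟨ℓ - 1, by omega⟩
  rw [sum_filter_pos_multinomial_eq_multinomialConv,
    multinomialConv_eq_eval_iterate_derivative (abelPoly ℕ) rootedTreeCount eval_zero_abelPoly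
      derivative_abelPoly,
    card_univ, Fintype.card_fin, eval_zero_iterate_derivative, coeff_abelPoly_succ_succ]
  simp only [Nat.cast_id, Nat.add_sub_cancel, Nat.add_sub_add_right]
  ring
end

section
/- For all reals a ≥ 0, b > 0 and every positive integer ℓ with ℓ ≤ a² b: Σ_{m=0}^{ℓ-1} (a^(2m) b^m) / ((m+1)!)² ≤ (e^ℓ / ℓ) * (ℓ / ℓ!) * a^(2ℓ-2) * b^(ℓ-1). -/
lemma fact_aux (k j : ℕ) : (k + j).factorial ≤ (k + j) ^ j * k.factorial := by
  induction j with
  | zero => simp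
  | succ j ih =>
    rw [← Nat.add_assoc, Nat.factorial_succ]
    calc (k + j + 1) * (k + j).factorial
        ≤ (k + j + 1) * ((k + j) ^ j * k.factorial) := Nat.mul_le_mul_left _ ih
      _ ≤ (k + j + 1) * ((k + j + 1) ^ j * k.factorial) :=
          Nat.mul_le_mul_left _ (Nat.mul_le_mul_right _ (Nat.pow_le_pow_left (Nat.le_succ _) j))
      _ = (k + j + 1) ^ (j + 1) * k.factorial := by ring

/-- For a positive integer `ℓ` and reals `a ≥ 0`, `b > 0` with `ℓ ≤ a² b`:
`∑_{m=0}^{ℓ-1} a^(2m) b^m / ((m+1)!)² ≤ (e^ℓ / ℓ) (ℓ / ℓ!) a^(2ℓ-2) b^(ℓ-1)`. -/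
theorem stmt_14 (ℓ : ℕ) (hℓ : 1 ≤ ℓ) (a b : ℝ) (ha : 0 ≤ a) (hb : 0 < b)
    (h : (ℓ : ℝ) ≤ a ^ 2 * b) :
    ∑ m ∈ Finset.range ℓ, a ^ (2 * m) * b ^ m / ((m + 1).factorial : ℝ) ^ 2
      ≤ (Real.exp ℓ / ℓ) * ((ℓ : ℝ) / (ℓ.factorial : ℝ))
          * a ^ (2 * ℓ - 2) * b ^ (ℓ - 1) := by
  set x : ℝ := a ^ 2 * b with hxdef
  have hx0 : 0 ≤ x := mul_nonneg (sq_nonneg a) hb.le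
  have hxl : (ℓ : ℝ) ≤ x := h
  have hl0 : (0 : ℝ) < ℓ := by exact_mod_cast hℓ
  have hx1 : (1 : ℝ) ≤ x := le_trans (by exact_mod_cast hℓ) hxl
  have hfpos : (0 : ℝ) < (ℓ.factorial : ℝ) := by exact_mod_cast ℓ.factorial_pos
  -- rewrite terms as powers of x
  have hterm : ∀ m ∈ Finset.range ℓ,
      a ^ (2 * m) * b ^ m / ((m + 1).factorial : ℝ) ^ 2
        ≤ x ^ (ℓ - 1) / (ℓ.factorial : ℝ) := by
    intro m hm
    rw [Finset.mem_range] at hm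
    have hfac : (ℓ.factorial : ℝ) ≤ (ℓ : ℝ) ^ (ℓ - 1 - m) * ((m + 1).factorial : ℝ) := by
      have := fact_aux (m + 1) (ℓ - 1 - m)
      have hkj : m + 1 + (ℓ - 1 - m) = ℓ := by omega
      rw [hkj] at this
      exact_mod_cast this
    have hx' : a ^ (2 * m) * b ^ m = x ^ m := by
      rw [hxdef, mul_pow, ← pow_mul]
    rw [hx']
    have hmfpos : (0 : ℝ) < ((m + 1).factorial : ℝ) := by exact_mod_cast (m + 1).factorial_pos
    calc x ^ m / ((m + 1).factorial : ℝ) ^ 2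
        ≤ x ^ m / ((m + 1).factorial : ℝ) := by
          apply div_le_div_of_nonneg_left (pow_nonneg hx0 m) hmfpos
          calc ((m + 1).factorial : ℝ) = ((m + 1).factorial : ℝ) ^ 1 := (pow_one _).symm
            _ ≤ ((m + 1).factorial : ℝ) ^ 2 := by
                apply pow_le_pow_right₀ _ (by norm_num)
                exact_mod_cast Nat.one_le_iff_ne_zero.mpr (Nat.factorial_ne_zero _)
      _ ≤ x ^ (ℓ - 1) / (ℓ.factorial : ℝ) := by
          rw [div_le_div_iff₀ hmfpos hfpos]
          have hsplit : x ^ (ℓ - 1) = x ^ m * x ^ (ℓ - 1 - m) := by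
            rw [← pow_add]; congr 1; omega
          rw [hsplit]
          calc x ^ m * (ℓ.factorial : ℝ)
              ≤ x ^ m * ((ℓ : ℝ) ^ (ℓ - 1 - m) * ((m + 1).factorial : ℝ)) := by
                gcongr
            _ ≤ x ^ m * (x ^ (ℓ - 1 - m) * ((m + 1).factorial : ℝ)) := by
                gcongr
            _ = x ^ m * x ^ (ℓ - 1 - m) * ((m + 1).factorial : ℝ) := by ring
  have hsum : ∑ m ∈ Finset.range ℓ, a ^ (2 * m) * b ^ m / ((m + 1).factorial : ℝ) ^ 2
      ≤ (ℓ : ℝ) * (x ^ (ℓ - 1) / (ℓ.factorial : ℝ)) := by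
    calc ∑ m ∈ Finset.range ℓ, a ^ (2 * m) * b ^ m / ((m + 1).factorial : ℝ) ^ 2
        ≤ ∑ m ∈ Finset.range ℓ, x ^ (ℓ - 1) / (ℓ.factorial : ℝ) :=
          Finset.sum_le_sum hterm
      _ = (ℓ : ℝ) * (x ^ (ℓ - 1) / (ℓ.factorial : ℝ)) := by
          rw [Finset.sum_const, Finset.card_range, nsmul_eq_mul]
  have hrhs : (Real.exp ℓ / ℓ) * ((ℓ : ℝ) / (ℓ.factorial : ℝ)) * a ^ (2 * ℓ - 2) * b ^ (ℓ - 1)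
      = Real.exp ℓ * (x ^ (ℓ - 1) / (ℓ.factorial : ℝ)) := by
    have : a ^ (2 * ℓ - 2) * b ^ (ℓ - 1) = x ^ (ℓ - 1) := by
      rw [hxdef, mul_pow, ← pow_mul]
      congr 2
      omega
    rw [mul_assoc ((Real.exp ℓ / ℓ) * ((ℓ : ℝ) / (ℓ.factorial : ℝ))), this]
    field_simp
  rw [hrhs]
  refine hsum.trans ?_
  apply mul_le_mul_of_nonneg_right _ (by positivity)
  calc (ℓ : ℝ) ≤ (ℓ : ℝ) + 1 := by linarith
    _ ≤ Real.exp ℓ := Real.add_one_le_exp _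
end
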